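/- Let G be a connected weighted graph on n ≥ 2 vertices with Laplacian L_G, and let H be a weighted graph on the same vertices whose Laplacian L_H makes it a (1±ε)-spectral sparsifier of G with 0 ≤ ε < 1. Let γ > 0, l ≥ 1, S ⊆ {1,…,n}, and assume lγ(1−ε)λ₁ > 1. Then the linear map from F to F given by f ↦ P_F((lγ·L_H + I_S)·f) is bijective, and its inverse has operator norm at most 1/(lγ(1−ε)λ₁ − 1); equivalently, for every z ∈ ℝⁿ there is a unique g ∈ F with P_F((lγ·L_H + I_S)·g) = P_F z, and it satisfies ‖g‖₂ ≤ ‖P_F z‖₂/(lγ(1−ε)λ₁ − 1). -/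

import Mathlib

open Matrix BigOperators Finset
open scoped Classical

noncomputable section

/-- The Laplacian of a weighted graph given by its adjacency matrix. -/
def Lap {n : ℕ} (A : Matrix (Fin n) (Fin n) ℝ) : Matrix (Fin n) (Fin n) ℝ :=
  Matrix.diagonal (fun i => ∑ j, A i j) - A

/-- `A` is a weighted graph adjacency matrix: symmetric, nonnegative, zero diagonal. -/
def IsWeightedGraph {n : ℕ} (A : Matrix (Fin n) (Fin n) ℝ) : Prop :=
  A.IsSymm ∧ (∀ i j, 0 ≤ A i j) ∧ (∀ i, A i i = 0)

/-- The graph with edge set `{(i,j) : A i j > 0}` is connected. -/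
def GraphConnected {n : ℕ} (A : Matrix (Fin n) (Fin n) ℝ) : Prop :=
  (SimpleGraph.fromRel (fun i j => 0 < A i j)).Connected

/-- `LH` is the Laplacian of a `(1±ε)`-spectral sparsifier of the graph with Laplacian `LG`. -/
def IsSparsifier {n : ℕ} (LG LH : Matrix (Fin n) (Fin n) ℝ) (ε : ℝ) : Prop :=
  ∀ x : Fin n → ℝ,
    (1 - ε) * (x ⬝ᵥ LG.mulVec x) ≤ x ⬝ᵥ LH.mulVec x ∧
    x ⬝ᵥ LH.mulVec x ≤ (1 + ε) * (x ⬝ᵥ LG.mulVec x)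

/-- Orthogonal projection `I - (1/n)·1·1ᵀ` onto `F = {f : ⟨f,1⟩ = 0}`. -/
def PF (n : ℕ) : Matrix (Fin n) (Fin n) ℝ :=
  1 - (n : ℝ)⁻¹ • Matrix.of (fun _ _ => (1 : ℝ))

/-- Diagonal 0/1 matrix selecting the coordinates in `S`. -/
def IS {n : ℕ} (S : Finset (Fin n)) : Matrix (Fin n) (Fin n) ℝ :=
  Matrix.diagonal (fun i => if i ∈ S then (1 : ℝ) else 0)

/-- Euclidean norm of a vector. -/
def vnorm {n : ℕ} (x : Fin n → ℝ) : ℝ := Real.sqrt (∑ i, (x i) ^ 2)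

/-- `lam` is the smallest eigenvalue of `L` restricted to `F = {x : ⟨x,1⟩ = 0}`, i.e. the
minimum of the Rayleigh quotient over nonzero vectors of `F`. -/
def IsLam1 {n : ℕ} (L : Matrix (Fin n) (Fin n) ℝ) (lam : ℝ) : Prop :=
  IsLeast {r | ∃ x : Fin n → ℝ, x ≠ 0 ∧ (∑ i, x i) = 0 ∧
    r = (x ⬝ᵥ L.mulVec x) / (∑ i, (x i) ^ 2)} lam

/-- `lam` is the largest eigenvalue of `L`: the maximum of the Rayleigh quotient. -/
def IsLamN {n : ℕ} (L : Matrix (Fin n) (Fin n) ℝ) (lam : ℝ) : Prop :=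
  IsGreatest {r | ∃ x : Fin n → ℝ, x ≠ 0 ∧
    r = (x ⬝ᵥ L.mulVec x) / (∑ i, (x i) ^ 2)} lam

/-- `Lp` is the Moore–Penrose pseudoinverse of `L`. -/
def IsMoorePenrose {n : ℕ} (L Lp : Matrix (Fin n) (Fin n) ℝ) : Prop :=
  L * Lp * L = L ∧ Lp * L * Lp = Lp ∧ (L * Lp).IsSymm ∧ (Lp * L).IsSymm

/-- The stability constant `β` of sparse-HFS. -/
def betaHFS (l : ℕ) (γ ε lam1 k : ℝ) : ℝ :=
  1.5 * k * Real.sqrt l / ((l : ℝ) * γ * (1 - ε) * lam1 - 1) ^ 2 +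
  Real.sqrt 2 * k / ((l : ℝ) * γ * (1 - ε) * lam1 - 1)

/-- `π(l,u) = (lu/(l+u-0.5))·(1/(1 - 1/(2·max{l,u})))`. -/
def piLU (l u : ℕ) : ℝ :=
  ((l : ℝ) * u / ((l : ℝ) + u - 0.5)) * (1 / (1 - 1 / (2 * ((max l u : ℕ) : ℝ))))

/-! On `F` the quadratic form of `M = lγ·L_H + I_S` dominates `c‖g‖²` with `c = lγ(1−ε)λ₁`:
the sparsifier bound and the Rayleigh quotient give `lγ·gᵀL_H g ≥ c‖g‖²`, and `I_S ⪰ 0`.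
Since `P_F` is self-adjoint and fixes `F`, `⟨g, P_F M g⟩ = ⟨g, M g⟩ ≥ c‖g‖²`, so Cauchy–Schwarz
gives `c‖g‖ ≤ ‖P_F M g‖`. Hence `g ↦ P_F M g` is injective on the finite-dimensional space `F`,
thus bijective, and its inverse has norm at most `1/c ≤ 1/(c − 1)`. -/

lemma PF_mulVec_apply {n : ℕ} (x : Fin n → ℝ) (i : Fin n) :
    (PF n *ᵥ x) i = x i - (n : ℝ)⁻¹ * ∑ j, x j := by
  simp [PF, mulVec, dotProduct, one_apply, sub_mul, ite_mul, sum_sub_distrib, mul_sum]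

lemma sum_PF_mulVec {n : ℕ} (x : Fin n → ℝ) : ∑ i, (PF n *ᵥ x) i = 0 := by
  rcases n.eq_zero_or_pos with rfl | hn
  · simp
  · simp only [PF_mulVec_apply, sum_sub_distrib, sum_const, card_univ, Fintype.card_fin,
      nsmul_eq_mul]
    field_simp
    ring

lemma dotProduct_PF_mulVec {n : ℕ} {g : Fin n → ℝ} (hg : ∑ i, g i = 0) (y : Fin n → ℝ) :
    g ⬝ᵥ PF n *ᵥ y = g ⬝ᵥ y := by
  simp only [dotProduct, PF_mulVec_apply, mul_sub, sum_sub_distrib, ← sum_mul, hg, zero_mul,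
    sub_zero]

lemma vnorm_nonneg {n : ℕ} (x : Fin n → ℝ) : 0 ≤ vnorm x := Real.sqrt_nonneg _

lemma vnorm_sq {n : ℕ} (x : Fin n → ℝ) : vnorm x ^ 2 = ∑ i, x i ^ 2 :=
  Real.sq_sqrt (sum_nonneg fun _ _ => sq_nonneg _)

lemma vnorm_eq_zero {n : ℕ} {x : Fin n → ℝ} : vnorm x = 0 ↔ x = 0 := by
  rw [vnorm, Real.sqrt_eq_zero (sum_nonneg fun _ _ => sq_nonneg _),
    sum_eq_zero_iff_of_nonneg fun _ _ => sq_nonneg _, funext_iff]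
  simp

lemma dotProduct_le_vnorm_mul_vnorm {n : ℕ} (x y : Fin n → ℝ) : x ⬝ᵥ y ≤ vnorm x * vnorm y :=
  Real.sum_mul_le_sqrt_mul_sqrt _ _ _

/-- The subspace `F = {f : ⟨f, 1⟩ = 0}`. -/
def sumZero (n : ℕ) : Submodule ℝ (Fin n → ℝ) where
  carrier := {x | ∑ i, x i = 0}
  add_mem' hx hy := by simp_all [sum_add_distrib]
  zero_mem' := by simp
  smul_mem' c x hx := by simp_all [← mul_sum]

def IsCoerciveOnSumZero {n : ℕ} (M : Matrix (Fin n) (Fin n) ℝ) (c : ℝ) : Prop :=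
  ∀ g : Fin n → ℝ, ∑ i, g i = 0 → c * ∑ i, g i ^ 2 ≤ g ⬝ᵥ M *ᵥ g

section Coercive

variable {n : ℕ} {M : Matrix (Fin n) (Fin n) ℝ} {c : ℝ}

lemma mul_vnorm_le_vnorm_PF_mulVec
    (hM : IsCoerciveOnSumZero M c)
    {g : Fin n → ℝ} (hg : ∑ i, g i = 0) : c * vnorm g ≤ vnorm (PF n *ᵥ M *ᵥ g) := by
  have h : vnorm g * (c * vnorm g) ≤ vnorm g * vnorm (PF n *ᵥ M *ᵥ g) :=
    calc vnorm g * (c * vnorm g) = c * ∑ i, g i ^ 2 := by rw [← vnorm_sq]; ring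
      _ ≤ g ⬝ᵥ M *ᵥ g := hM g hg
      _ = g ⬝ᵥ PF n *ᵥ M *ᵥ g := (dotProduct_PF_mulVec hg _).symm
      _ ≤ vnorm g * vnorm (PF n *ᵥ M *ᵥ g) := dotProduct_le_vnorm_mul_vnorm _ _
  rcases (vnorm_nonneg g).eq_or_lt with h0 | hpos
  · rw [← h0, mul_zero]
    exact vnorm_nonneg _
  · exact le_of_mul_le_mul_left h hpos

lemma eq_of_PF_mulVec_eq (hc : 0 < c)
    (hM : IsCoerciveOnSumZero M c)
    {g g' : Fin n → ℝ} (hg : ∑ i, g i = 0) (hg' : ∑ i, g' i = 0)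
    (h : PF n *ᵥ M *ᵥ g = PF n *ᵥ M *ᵥ g') : g = g' := by
  have hsum : ∑ i, (g - g') i = 0 := by simp [sum_sub_distrib, hg, hg']
  have hbound := mul_vnorm_le_vnorm_PF_mulVec hM hsum
  rw [mulVec_sub, mulVec_sub, h, sub_self, vnorm_eq_zero.mpr rfl] at hbound
  have hzero : vnorm (g - g') = 0 :=
    le_antisymm (nonpos_of_mul_nonpos_right hbound hc) (vnorm_nonneg _)
  exact sub_eq_zero.mp (vnorm_eq_zero.mp hzero)

lemma exists_PF_mulVec_eq (hc : 0 < c)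
    (hM : IsCoerciveOnSumZero M c)
    (z : Fin n → ℝ) : ∃ g : Fin n → ℝ, ∑ i, g i = 0 ∧ PF n *ᵥ M *ᵥ g = PF n *ᵥ z := by
  let T : sumZero n →ₗ[ℝ] sumZero n :=
    (mulVecLin (PF n * M)).restrict fun x _ => by
      simpa [sumZero, ← mulVec_mulVec] using sum_PF_mulVec (M *ᵥ x)
  have hT : Function.Injective T := fun g g' h =>
    Subtype.ext (eq_of_PF_mulVec_eq hc hM g.2 g'.2 (by simpa [T] using congrArg Subtype.val h))
  obtain ⟨g, hg⟩ := LinearMap.injective_iff_surjective.mp hT ⟨PF n *ᵥ z, sum_PF_mulVec z⟩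
  exact ⟨g, g.2, by simpa [T] using congrArg Subtype.val hg⟩

end Coercive

lemma dotProduct_IS_mulVec_self_nonneg {n : ℕ} (S : Finset (Fin n)) (g : Fin n → ℝ) :
    0 ≤ g ⬝ᵥ IS S *ᵥ g := by
  simp only [IS, dotProduct, mulVec_diagonal]
  exact sum_nonneg fun i _ => by split_ifs <;> simp [mul_self_nonneg]

lemma IsLam1.mul_sum_sq_le {n : ℕ} {L : Matrix (Fin n) (Fin n) ℝ} {lam : ℝ}
    (h : IsLam1 L lam) {g : Fin n → ℝ} (hg : ∑ i, g i = 0) :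
    lam * ∑ i, g i ^ 2 ≤ g ⬝ᵥ L *ᵥ g := by
  rcases eq_or_ne g 0 with rfl | hg0
  · simp
  · have hpos : 0 < ∑ i, g i ^ 2 := by
      obtain ⟨i, hi⟩ := Function.ne_iff.mp hg0
      exact sum_pos' (fun _ _ => sq_nonneg _) ⟨i, mem_univ i, pow_two_pos_of_ne_zero hi⟩
    exact (le_div_iff₀ hpos).mp (h.2 ⟨g, hg0, hg, rfl⟩)

lemma IsSparsifier.isCoerciveOnSumZero_smul_add_IS {n : ℕ} {LG LH : Matrix (Fin n) (Fin n) ℝ}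
    {ε t lam : ℝ} (hsp : IsSparsifier LG LH ε) (hε : ε < 1) (ht : 0 ≤ t)
    (hlam : IsLam1 LG lam) (S : Finset (Fin n)) :
    IsCoerciveOnSumZero (t • LH + IS S) (t * (1 - ε) * lam) := by
  intro g hg
  have hts : 0 ≤ t * (1 - ε) := mul_nonneg ht (sub_nonneg.mpr hε.le)
  calc t * (1 - ε) * lam * ∑ i, g i ^ 2 = t * (1 - ε) * (lam * ∑ i, g i ^ 2) := by ring
    _ ≤ t * (1 - ε) * (g ⬝ᵥ LG *ᵥ g) := mul_le_mul_of_nonneg_left (hlam.mul_sum_sq_le hg) hts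
    _ = t * ((1 - ε) * (g ⬝ᵥ LG *ᵥ g)) := by ring
    _ ≤ t * (g ⬝ᵥ LH *ᵥ g) := mul_le_mul_of_nonneg_left (hsp g).1 ht
    _ ≤ t * (g ⬝ᵥ LH *ᵥ g) + g ⬝ᵥ IS S *ᵥ g :=
      le_add_of_nonneg_right (dotProduct_IS_mulVec_self_nonneg S g)
    _ = g ⬝ᵥ (t • LH + IS S) *ᵥ g := by
      rw [add_mulVec, dotProduct_add, smul_mulVec, dotProduct_smul, smul_eq_mul]

theorem stmt_4_general {n : ℕ}
    (AG AH : Matrix (Fin n) (Fin n) ℝ)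
    (ε : ℝ) (hε1 : ε < 1)
    (hsp : IsSparsifier (Lap AG) (Lap AH) ε)
    (γ : ℝ) (hγ : 0 < γ)
    (l : ℕ)
    (S : Finset (Fin n))
    (lam1 : ℝ) (hlam1 : IsLam1 (Lap AG) lam1)
    (hmain : 1 < (l : ℝ) * γ * (1 - ε) * lam1) :
    ∀ z : Fin n → ℝ, ∃ g : Fin n → ℝ,
      ((∑ i, g i = 0) ∧
        (PF n).mulVec ((((l : ℝ) * γ) • Lap AH + IS S).mulVec g) = (PF n).mulVec z ∧
        vnorm g ≤ vnorm ((PF n).mulVec z) / ((l : ℝ) * γ * (1 - ε) * lam1 - 1)) ∧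
      ∀ g' : Fin n → ℝ,
        (∑ i, g' i = 0) ∧
          (PF n).mulVec ((((l : ℝ) * γ) • Lap AH + IS S).mulVec g') = (PF n).mulVec z →
        g' = g := by
  have hM := hsp.isCoerciveOnSumZero_smul_add_IS hε1 (mul_nonneg l.cast_nonneg hγ.le) hlam1 S
  have hc := one_pos.trans hmain
  intro z
  obtain ⟨g, hg, hgz⟩ := exists_PF_mulVec_eq hc hM z
  refine ⟨g, ⟨hg, hgz, ?_⟩, fun g' ⟨hg', hg'z⟩ => eq_of_PF_mulVec_eq hc hM hg' hg ?_⟩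
  · have hbound := mul_vnorm_le_vnorm_PF_mulVec hM hg
    rw [hgz] at hbound
    rw [le_div_iff₀ (sub_pos.mpr hmain)]
    nlinarith [vnorm_nonneg g]
  · rw [hg'z, hgz]

/-- `f ↦ P_F((lγ·L_H + I_S)·f)` is a bijection of `F` whose inverse has
operator norm at most `1/(lγ(1−ε)λ₁ − 1)`: for every `z` there is a unique `g ∈ F` with
`P_F((lγ·L_H + I_S)·g) = P_F z`, and `‖g‖ ≤ ‖P_F z‖/(lγ(1−ε)λ₁ − 1)`. -/
theorem stmt_4 {n : ℕ} (hn : 2 ≤ n)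
    (AG AH : Matrix (Fin n) (Fin n) ℝ)
    (hG : IsWeightedGraph AG) (hGc : GraphConnected AG)
    (hH : IsWeightedGraph AH)
    (ε : ℝ) (hε0 : 0 ≤ ε) (hε1 : ε < 1)
    (hsp : IsSparsifier (Lap AG) (Lap AH) ε)
    (γ : ℝ) (hγ : 0 < γ)
    (l : ℕ) (hl : 1 ≤ l)
    (S : Finset (Fin n))
    (lam1 : ℝ) (hlam1 : IsLam1 (Lap AG) lam1)
    (hmain : 1 < (l : ℝ) * γ * (1 - ε) * lam1) :
    ∀ z : Fin n → ℝ, ∃ g : Fin n → ℝ,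
      ((∑ i, g i = 0) ∧
        (PF n).mulVec ((((l : ℝ) * γ) • Lap AH + IS S).mulVec g) = (PF n).mulVec z ∧
        vnorm g ≤ vnorm ((PF n).mulVec z) / ((l : ℝ) * γ * (1 - ε) * lam1 - 1)) ∧
      ∀ g' : Fin n → ℝ,
        (∑ i, g' i = 0) ∧
          (PF n).mulVec ((((l : ℝ) * γ) • Lap AH + IS S).mulVec g') = (PF n).mulVec z →
        g' = g :=
  stmt_4_general AG AH ε hε1 hsp γ hγ l S lam1 hlam1 hmain
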